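/- arXiv:1105.0434 — 3 statements merged into one kernel-verified Lean document; each statement's English description precedes it below -/
import Mathlib

section
/- Let H be a coribbon Hopf algebra, χ ∈ H a dual trace (i.e., Δᵒᵖ(χ) = Δ(χ)), and w : H → k the copivotal form. Then the element t = w(χ⁽¹⁾)·χ⁽²⁾ is a dual quantum trace, i.e., Δᵒᵖ(t) = (id ⊗ S²)(Δ(t)). -/
open TensorProduct

/-- Convolution product of linear forms on a bialgebra. -/
noncomputable def conv {k H : Type*} [CommSemiring k] [Semiring H] [Bialgebra k H]
    (f g : H →ₗ[k] k) : H →ₗ[k] k :=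
  LinearMap.mul' k k ∘ₗ TensorProduct.map f g ∘ₗ Coalgebra.comul

/-- `x ↦ f(x⁽¹⁾)·x⁽²⁾`. -/
noncomputable def actL {k H : Type*} [CommSemiring k] [Semiring H] [Bialgebra k H]
    (f : H →ₗ[k] k) : H →ₗ[k] H :=
  (TensorProduct.lid k H).toLinearMap ∘ₗ TensorProduct.map f LinearMap.id ∘ₗ Coalgebra.comul

/-- `x ↦ x⁽¹⁾·f(x⁽²⁾)`. -/
noncomputable def actR {k H : Type*} [CommSemiring k] [Semiring H] [Bialgebra k H]
    (f : H →ₗ[k] k) : H →ₗ[k] H :=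
  (TensorProduct.rid k H).toLinearMap ∘ₗ TensorProduct.map LinearMap.id f ∘ₗ Coalgebra.comul

/-!
With Sweedler notation, coassociativity gives `x₁ f(x₂) ⊗ x₃ = x₁ ⊗ f(x₂) x₃` for every
linear form `f`. Conjugating by the flip, which fixes `Δχ`, turns this into
`f(χ₁) χ₂ ⊗ χ₃ = χ₁ ⊗ χ₂ f(χ₃)` for a dual trace `χ`. Hence `Δᵒᵖ(t) = χ₁ ⊗ w(χ₂) χ₃` and
`(id ⊗ S²)(Δt) = χ₁ ⊗ S²(χ₂ w(χ₃))`, and these agree because `S²(x₁ w(x₂)) = w(x₁) x₂`,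
which follows from the copivotal formula and `w̄ ∗ w = ε`.
-/

open Coalgebra LinearMap

section
variable {k H : Type*} [CommSemiring k] [Semiring H] [Bialgebra k H]

lemma comul_comp_actL (f : H →ₗ[k] k) :
    comul ∘ₗ actL f = rTensor H (actL f) ∘ₗ comul := by
  let Φ : H ⊗[k] (H ⊗[k] H) →ₗ[k] H ⊗[k] H :=
    (TensorProduct.lid k (H ⊗[k] H)).toLinearMap ∘ₗ rTensor (H ⊗[k] H) f
  have hL : comul ∘ₗ (TensorProduct.lid k H).toLinearMap ∘ₗ rTensor H f =
      Φ ∘ₗ lTensor H comul := by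
    ext; simp [Φ]
  have hR : rTensor H ((TensorProduct.lid k H).toLinearMap ∘ₗ rTensor H f) =
      Φ ∘ₗ (TensorProduct.assoc k H H H).toLinearMap := by
    ext; simp [Φ, TensorProduct.smul_tmul']
  calc comul ∘ₗ actL f = Φ ∘ₗ lTensor H comul ∘ₗ comul := by rw [← comp_assoc, ← hL]; rfl
    _ = Φ ∘ₗ (TensorProduct.assoc k H H H).toLinearMap ∘ₗ rTensor H comul ∘ₗ comul := by
        rw [coassoc]
    _ = rTensor H (actL f) ∘ₗ comul := by
        rw [← comp_assoc, ← hR, ← comp_assoc, ← rTensor_comp]; rfl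

lemma comul_comp_actR (f : H →ₗ[k] k) :
    comul ∘ₗ actR f = lTensor H (actR f) ∘ₗ comul := by
  let Φ : (H ⊗[k] H) ⊗[k] H →ₗ[k] H ⊗[k] H :=
    (TensorProduct.rid k (H ⊗[k] H)).toLinearMap ∘ₗ lTensor (H ⊗[k] H) f
  have hL : comul ∘ₗ (TensorProduct.rid k H).toLinearMap ∘ₗ lTensor H f =
      Φ ∘ₗ rTensor H comul := by
    ext; simp [Φ]
  have hR : lTensor H ((TensorProduct.rid k H).toLinearMap ∘ₗ lTensor H f) =
      Φ ∘ₗ (TensorProduct.assoc k H H H).symm.toLinearMap := by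
    ext; simp [Φ]
  calc comul ∘ₗ actR f = Φ ∘ₗ rTensor H comul ∘ₗ comul := by rw [← comp_assoc, ← hL]; rfl
    _ = Φ ∘ₗ (TensorProduct.assoc k H H H).symm.toLinearMap ∘ₗ lTensor H comul ∘ₗ comul := by
        rw [coassoc_symm]
    _ = lTensor H (actR f) ∘ₗ comul := by
        rw [← comp_assoc, ← hR, ← comp_assoc, ← lTensor_comp]; rfl

lemma rTensor_actR_comp_comul (f : H →ₗ[k] k) :
    rTensor H (actR f) ∘ₗ comul = lTensor H (actL f) ∘ₗ comul := by
  let Φ : (H ⊗[k] H) ⊗[k] H →ₗ[k] H ⊗[k] H :=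
    rTensor H ((TensorProduct.rid k H).toLinearMap ∘ₗ lTensor H f)
  have hR : lTensor H ((TensorProduct.lid k H).toLinearMap ∘ₗ rTensor H f) =
      Φ ∘ₗ (TensorProduct.assoc k H H H).symm.toLinearMap := by
    ext; simp [Φ, TensorProduct.smul_tmul']
  calc rTensor H (actR f) ∘ₗ comul = Φ ∘ₗ rTensor H comul ∘ₗ comul := by
        rw [← comp_assoc, ← rTensor_comp]; rfl
    _ = Φ ∘ₗ (TensorProduct.assoc k H H H).symm.toLinearMap ∘ₗ lTensor H comul ∘ₗ comul := by
        rw [coassoc_symm]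
    _ = lTensor H (actL f) ∘ₗ comul := by
        rw [← comp_assoc, ← hR, ← comp_assoc, ← lTensor_comp]; rfl

lemma actR_comp_actL (f g : H →ₗ[k] k) : actR f ∘ₗ actL g = actL g ∘ₗ actR f := by
  have hL : actR f ∘ₗ (TensorProduct.lid k H).toLinearMap =
      (TensorProduct.lid k H).toLinearMap ∘ₗ lTensor k (actR f) := by
    ext; simp
  calc actR f ∘ₗ actL g
      = (TensorProduct.lid k H).toLinearMap ∘ₗ (lTensor k (actR f) ∘ₗ rTensor H g) ∘ₗ comul := by
        rw [actL, ← comp_assoc, hL]; rfl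
    _ = (TensorProduct.lid k H).toLinearMap ∘ₗ rTensor H g ∘ₗ lTensor H (actR f) ∘ₗ comul := by
        rw [lTensor_comp_rTensor, ← rTensor_comp_lTensor]; rfl
    _ = actL g ∘ₗ actR f := by
        rw [← comul_comp_actR]; rfl

lemma comp_actR (f g : H →ₗ[k] k) : f ∘ₗ actR g = conv f g := by
  ext x
  simp only [actR, conv, comp_apply]
  induction comul (R := k) x using TensorProduct.induction_on with
  | zero => simp
  | tmul a b => simp [mul_comm]
  | add x y hx hy => simp_all

lemma actR_comp_actR (f g : H →ₗ[k] k) : actR f ∘ₗ actR g = actR (conv f g) := by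
  calc actR f ∘ₗ actR g
      = (TensorProduct.rid k H).toLinearMap ∘ₗ (lTensor H f ∘ₗ lTensor H (actR g)) ∘ₗ comul := by
        rw [actR, comp_assoc, comp_assoc, comul_comp_actR]; rfl
    _ = actR (conv f g) := by
        rw [← lTensor_comp, comp_actR]; rfl

lemma actR_counit : actR (counit : H →ₗ[k] k) = LinearMap.id := by
  ext x
  change TensorProduct.rid k H (lTensor H counit (comul x)) = x
  rw [lTensor_counit_comul, TensorProduct.rid_tmul, one_smul]

lemma actR_comp_actL_comp_actR {f g : H →ₗ[k] k} (h : conv g f = counit) :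
    actR g ∘ₗ actL f ∘ₗ actR f = actL f := by
  rw [← actR_comp_actL, ← comp_assoc, actR_comp_actR, h, actR_counit, id_comp]

lemma rTensor_actL_comul_of_comm_comul {χ : H}
    (hχ : TensorProduct.comm k H H (comul χ) = comul χ) (f : H →ₗ[k] k) :
    rTensor H (actL f) (comul χ) = lTensor H (actR f) (comul χ) := by
  calc rTensor H (actL f) (comul χ)
      = TensorProduct.comm k H H (lTensor H (actL f) (comul χ)) := by
        rw [← rTensor_comm, hχ]
    _ = TensorProduct.comm k H H (rTensor H (actR f) (comul χ)) := by
        rw [← comp_apply, ← rTensor_actR_comp_comul, comp_apply]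
    _ = TensorProduct.comm k H H (rTensor H (actR f) (TensorProduct.comm k H H (comul χ))) := by
        rw [hχ]
    _ = lTensor H (actR f) (comul χ) := by
        rw [rTensor_comm, TensorProduct.comm_comm]

end

theorem dual_trace_gives_dual_quantum_trace_general
    {k H : Type*} [Field k] [Ring H] [HopfAlgebra k H]
    (w : H →ₐ[k] k) (wbar : H →ₗ[k] k)
    (hw2 : conv wbar w.toLinearMap = Coalgebra.counit)
    (hS2 : (HopfAlgebra.antipode k : H →ₗ[k] H) ∘ₗ HopfAlgebra.antipode k
      = actR wbar ∘ₗ actL w.toLinearMap)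
    (χ : H) (hχ : TensorProduct.comm k H H (Coalgebra.comul χ) = Coalgebra.comul χ) :
    TensorProduct.comm k H H (Coalgebra.comul (actL w.toLinearMap χ)) =
      TensorProduct.map LinearMap.id
        ((HopfAlgebra.antipode k : H →ₗ[k] H) ∘ₗ HopfAlgebra.antipode k)
        (Coalgebra.comul (actL w.toLinearMap χ)) := by
  have hΔt : comul (actL w.toLinearMap χ) = rTensor H (actL w.toLinearMap) (comul χ) :=
    congr($(comul_comp_actL w.toLinearMap) χ)
  calc TensorProduct.comm k H H (comul (actL w.toLinearMap χ))
      = lTensor H (actL w.toLinearMap) (comul χ) := by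
        rw [hΔt, ← lTensor_comm, hχ]
    _ = lTensor H ((HopfAlgebra.antipode k : H →ₗ[k] H) ∘ₗ HopfAlgebra.antipode k)
          (lTensor H (actR w.toLinearMap) (comul χ)) := by
        rw [← lTensor_comp_apply, hS2, comp_assoc, actR_comp_actL_comp_actR hw2]
    _ = _ := by
        rw [hΔt, rTensor_actL_comul_of_comm_comul hχ]
        rfl

/-- Let `H` be a Hopf algebra with a copivotal form `w` (a convolution-invertible algebra
homomorphism with `S² = w ⇀ · ↼ w̄`).  If `χ ∈ H` is a dual trace (`Δᵒᵖ(χ) = Δ(χ)`),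
then `t = w(χ⁽¹⁾)·χ⁽²⁾` is a dual quantum trace: `Δᵒᵖ(t) = (id ⊗ S²)(Δ(t))`. -/
theorem dual_trace_gives_dual_quantum_trace
    {k H : Type*} [Field k] [Ring H] [HopfAlgebra k H]
    (w : H →ₐ[k] k) (wbar : H →ₗ[k] k)
    (hw1 : conv w.toLinearMap wbar = Coalgebra.counit)
    (hw2 : conv wbar w.toLinearMap = Coalgebra.counit)
    (hS2 : (HopfAlgebra.antipode k : H →ₗ[k] H) ∘ₗ HopfAlgebra.antipode k
      = actR wbar ∘ₗ actL w.toLinearMap)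
    (χ : H) (hχ : TensorProduct.comm k H H (Coalgebra.comul χ) = Coalgebra.comul χ) :
    TensorProduct.comm k H H (Coalgebra.comul (actL w.toLinearMap χ)) =
      TensorProduct.map LinearMap.id
        ((HopfAlgebra.antipode k : H →ₗ[k] H) ∘ₗ HopfAlgebra.antipode k)
        (Coalgebra.comul (actL w.toLinearMap χ)) :=
  dual_trace_gives_dual_quantum_trace_general w wbar hw2 hS2 χ hχ
end

section
/- Let H be a Hopf algebra with a copivotal form w : H → k, and let χ ∈ H be a dual trace. Set t = w(χ⁽¹⁾)·χ⁽²⁾. Then t is S-compatible, i.e., w̄(t⁽¹⁾)·S(t⁽²⁾) = w̄(t⁽¹⁾)·t⁽²⁾, if and only if χ is S-invariant, i.e., S(χ) = χ. -/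
open TensorProduct

/-! Writing `f ⇀ x` for `actL f x = f(x⁽¹⁾)·x⁽²⁾`, coassociativity gives `g ⇀ (f ⇀ x) = (f ∗ g) ⇀ x`,
so `w ∗ w̄ = ε` yields `w̄ ⇀ t = χ`. The left side of the S-compatibility condition is
`S(w̄ ⇀ t) = S χ` and the right side is `w̄ ⇀ t = χ`. -/

namespace Coalgebra.Repr

variable {k H ι : Type*} [CommSemiring k] [Semiring H] [Bialgebra k H] {x : H}

lemma actL_apply (r : Repr k x ι) (f : H →ₗ[k] k) :
    actL f x = ∑ i ∈ r.index, f (r.left i) • r.right i := by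
  simp [actL, ← r.eq, map_sum]

lemma conv_apply (r : Repr k x ι) (f g : H →ₗ[k] k) :
    conv f g x = ∑ i ∈ r.index, f (r.left i) * g (r.right i) := by
  simp [conv, ← r.eq, map_sum]

end Coalgebra.Repr

section

variable {k H : Type*} [CommSemiring k] [Semiring H] [Bialgebra k H]

lemma actL_actL (f g : H →ₗ[k] k) (x : H) : actL g (actL f x) = actL (conv f g) x := by
  classical
  let r := Coalgebra.Repr.arbitrary k x
  let r₁ i := Coalgebra.Repr.arbitrary k (r.left i)
  let r₂ i := Coalgebra.Repr.arbitrary k (r.right i)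
  have coassoc := congr(TensorProduct.lid k H (TensorProduct.map f
      (TensorProduct.lid k H ∘ₗ TensorProduct.map g LinearMap.id)
        $(Coalgebra.sum_tmul_tmul_eq r r₁ r₂)))
  simp only [map_sum, TensorProduct.map_tmul, LinearMap.comp_apply, LinearEquiv.coe_coe,
    TensorProduct.lid_tmul, LinearMap.id_apply, smul_smul] at coassoc
  calc actL g (actL f x)
      = ∑ i ∈ r.index, ∑ j ∈ (r₂ i).index,
          (f (r.left i) * g ((r₂ i).left j)) • (r₂ i).right j := by
        simp only [r.actL_apply, map_sum, map_smul, (r₂ _).actL_apply, Finset.smul_sum, smul_smul]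
    _ = ∑ i ∈ r.index, ∑ j ∈ (r₁ i).index,
          (f ((r₁ i).left j) * g ((r₁ i).right j)) • r.right i :=
        coassoc.symm
    _ = actL (conv f g) x := by
        simp only [r.actL_apply, (r₁ _).conv_apply, Finset.sum_smul]

lemma actL_counit : actL (Coalgebra.counit : H →ₗ[k] k) = LinearMap.id :=
  LinearMap.ext fun x => (Coalgebra.Repr.arbitrary k x).actL_apply _ ▸ Coalgebra.sum_counit_smul _

lemma lid_comp_map_comp_comul {M : Type*} [AddCommMonoid M] [Module k M]
    (g : H →ₗ[k] k) (G : H →ₗ[k] M) :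
    (TensorProduct.lid k M).toLinearMap ∘ₗ TensorProduct.map g G ∘ₗ Coalgebra.comul
      = G ∘ₗ actL g := by
  simp only [actL, coassoc_simps]

end

theorem scompatible_iff_sinvariant_general
    {k H : Type*} [Field k] [Ring H] [HopfAlgebra k H]
    (w : H →ₐ[k] k) (wbar : H →ₗ[k] k)
    (hw1 : conv w.toLinearMap wbar = Coalgebra.counit)
    (χ : H) :
    ((TensorProduct.lid k H).toLinearMap ∘ₗ
        TensorProduct.map wbar (HopfAlgebra.antipode k : H →ₗ[k] H) ∘ₗ Coalgebra.comul)
        (actL w.toLinearMap χ) = actL wbar (actL w.toLinearMap χ)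
      ↔ (HopfAlgebra.antipode k : H →ₗ[k] H) χ = χ := by
  have hrecover : actL wbar (actL w.toLinearMap χ) = χ := by
    rw [actL_actL, hw1, actL_counit, LinearMap.id_apply]
  rw [lid_comp_map_comp_comul, LinearMap.comp_apply, hrecover]

/-- Let `H` be a Hopf algebra with invertible antipode and copivotal form `w`, and let
`χ ∈ H` be a dual trace.  Set `t = w(χ⁽¹⁾)·χ⁽²⁾`.  Then `t` is S-compatible, i.e.
`w̄(t⁽¹⁾)·S(t⁽²⁾) = w̄(t⁽¹⁾)·t⁽²⁾`, if and only if `χ` is S-invariant, i.e. `S(χ) = χ`. -/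
theorem scompatible_iff_sinvariant
    {k H : Type*} [Field k] [Ring H] [HopfAlgebra k H]
    (w : H →ₐ[k] k) (wbar : H →ₗ[k] k)
    (hw1 : conv w.toLinearMap wbar = Coalgebra.counit)
    (hw2 : conv wbar w.toLinearMap = Coalgebra.counit)
    (hS2 : (HopfAlgebra.antipode k : H →ₗ[k] H) ∘ₗ HopfAlgebra.antipode k
      = actR wbar ∘ₗ actL w.toLinearMap)
    (hSbij : Function.Bijective (HopfAlgebra.antipode k : H →ₗ[k] H))
    (χ : H) (hχ : TensorProduct.comm k H H (Coalgebra.comul χ) = Coalgebra.comul χ) :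
    ((TensorProduct.lid k H).toLinearMap ∘ₗ
        TensorProduct.map wbar (HopfAlgebra.antipode k : H →ₗ[k] H) ∘ₗ Coalgebra.comul)
        (actL w.toLinearMap χ) = actL wbar (actL w.toLinearMap χ)
      ↔ (HopfAlgebra.antipode k : H →ₗ[k] H) χ = χ :=
  scompatible_iff_sinvariant_general w wbar hw1 χ
end

section
/- Let H be a finite-dimensional Hopf algebra over a field k, ℓ ∈ H a left-integral (x·ℓ = ε(x)·ℓ for all x ∈ H), and c : H → k a left-cointegral (a left-integral in the dual Hopf algebra H*). If c(ℓ) = 1, then ℓ is non-degenerate: the bilinear form H* ⊗ H* → k, φ ⊗ ψ ↦ φ(ℓ⁽¹⁾)ψ(ℓ⁽²⁾) is non-degenerate. -/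
/-!
Write `ℓ ↼ φ = φ(ℓ₍₁₎) ℓ₍₂₎`, so that the form is `(φ, ψ) ↦ ψ(ℓ ↼ φ)`. As `ℓ` is a left
integral, `(1 ⊗ x) Δℓ = (S x ⊗ 1) Δℓ`, so `x (ℓ ↼ φ) = ℓ ↼ φ(S x · -)` and the image of
`φ ↦ ℓ ↼ φ` is a left ideal. It contains
`1 = c(ℓ) 1 = S((ℓ ↼ c)₍₁₎) (ℓ ↼ c)₍₂₎ = ∑ᵢ S(eᵢ ↼ c) (ℓ ↼ eᵢ*)` for any basis `eᵢ` of `H`,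
so `φ ↦ ℓ ↼ φ` is onto, hence bijective as `dim H* = dim H`; this is non-degeneracy on both
sides.
-/

open TensorProduct

section

open Coalgebra HopfAlgebra LinearMap

theorem Module.Basis.sum_tmul_lid_rTensor_coord {k M N ι : Type*} [CommSemiring k]
    [AddCommMonoid M] [Module k M] [AddCommMonoid N] [Module k N] [Fintype ι]
    (b : Module.Basis ι k M) (t : M ⊗[k] N) :
    ∑ i, b i ⊗ₜ TensorProduct.lid k N ((b.coord i).rTensor N t) = t := by
  induction t using TensorProduct.induction_on with
  | zero => simp
  | tmul m n =>
    simp only [rTensor_tmul, lid_tmul, Module.Basis.coord_apply, ← smul_tmul, ← sum_tmul,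
      b.sum_repr]
  | add s t hs ht => simp only [map_add, tmul_add, Finset.sum_add_distrib, hs, ht]

variable {k C : Type*} [CommSemiring k] [AddCommMonoid C] [Module k C] [Coalgebra k C]

/-- `rightHit x f = f(x₍₁₎) x₍₂₎`, written `x ↼ f` in the Hopf algebra literature. -/
noncomputable def rightHit : C →ₗ[k] (C →ₗ[k] k) →ₗ[k] C :=
  LinearMap.mk₂ k (fun x f => TensorProduct.lid k C (f.rTensor C (comul x)))
    (by simp) (by simp) (by simp [rTensor_add]) (by simp [rTensor_smul])

theorem rightHit_apply (x : C) (f : C →ₗ[k] k) :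
    rightHit x f = TensorProduct.lid k C (f.rTensor C (comul x)) := rfl

theorem counit_rightHit (x : C) (f : C →ₗ[k] k) : counit (R := k) (rightHit x f) = f x := by
  have h : counit ∘ₗ (TensorProduct.lid k C).toLinearMap ∘ₗ f.rTensor C =
      (TensorProduct.lid k k).toLinearMap ∘ₗ f.rTensor k ∘ₗ counit.lTensor C := by
    ext; simp
  have hx := congr($h (comul x))
  simp only [comp_apply, LinearEquiv.coe_coe, lTensor_counit_comul, rTensor_tmul, lid_tmul,
    smul_eq_mul, mul_one] at hx
  exact hx

theorem comul_rightHit (x : C) (f : C →ₗ[k] k) :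
    comul (R := k) (rightHit x f) = (rightHit.flip f).rTensor C (comul x) := by
  have hassoc : ((TensorProduct.lid k C).toLinearMap ∘ₗ f.rTensor C).rTensor C ∘ₗ
      (TensorProduct.assoc k C C C).symm.toLinearMap =
        (TensorProduct.lid k _).toLinearMap ∘ₗ f.rTensor (C ⊗[k] C) := by
    ext; simp [smul_tmul']
  have hcomul : comul ∘ₗ (TensorProduct.lid k C).toLinearMap ∘ₗ f.rTensor C =
      (TensorProduct.lid k _).toLinearMap ∘ₗ f.rTensor _ ∘ₗ comul.lTensor C := by
    ext; simp
  have hflip : rightHit.flip f = (TensorProduct.lid k C).toLinearMap ∘ₗ f.rTensor C ∘ₗ comul :=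
    rfl
  rw [hflip, ← comp_assoc, rTensor_comp_apply, ← coassoc_symm_apply, rightHit_apply]
  exact congr($hcomul (comul x)).trans congr($hassoc _).symm

theorem conv_apply_eq_apply_rightHit {k H : Type*} [CommSemiring k] [Semiring H] [Bialgebra k H]
    (φ ψ : H →ₗ[k] k) (x : H) : conv φ ψ x = ψ (rightHit x φ) := by
  have h : mul' k k ∘ₗ TensorProduct.map φ ψ =
      ψ ∘ₗ (TensorProduct.lid k H).toLinearMap ∘ₗ φ.rTensor H := by
    ext; simp
  exact congr($h (comul x))

theorem HopfAlgebra.sum_antipode_tmul_one_mul_comul {k H ι : Type*} [CommSemiring k] [Semiring H]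
    [HopfAlgebra k H] {x : H} (𝓡 : Repr k x ι) :
    ∑ i ∈ 𝓡.index, (antipode k (𝓡.left i) ⊗ₜ[k] (1 : H)) * comul (𝓡.right i) = 1 ⊗ₜ x := by
  let Θ := (mul' k H ∘ₗ (antipode k).rTensor H).rTensor H ∘ₗ
    (TensorProduct.assoc k H H H).symm.toLinearMap
  have hΘ (a : H) (t : H ⊗[k] H) : Θ (a ⊗ₜ t) = (antipode k a ⊗ₜ 1) * t := by
    induction t using TensorProduct.induction_on with
    | zero => simp
    | tmul b c => simp [Θ]
    | add s t hs ht => simp only [tmul_add, map_add, hs, ht, mul_add]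
  calc ∑ i ∈ 𝓡.index, (antipode k (𝓡.left i) ⊗ₜ[k] (1 : H)) * comul (𝓡.right i)
      = Θ (comul.lTensor H (comul x)) := by simp [← 𝓡.eq, map_sum, hΘ]
    _ = (mul' k H ∘ₗ (antipode k).rTensor H ∘ₗ comul).rTensor H (comul x) := by
      simp [Θ, rTensor_comp_apply]
    _ = 1 ⊗ₜ x := by simp [mul_antipode_rTensor_comul, rTensor_comp_apply]

variable {k H : Type*} [CommSemiring k] [Semiring H] [HopfAlgebra k H]

variable (k) in
def IsLeftIntegral (ℓ : H) : Prop := ∀ x : H, x * ℓ = counit (R := k) x • ℓ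

namespace IsLeftIntegral

variable {ℓ : H} (hℓ : IsLeftIntegral k ℓ)
include hℓ

theorem comul_mul_comul (x : H) : comul x * comul ℓ = counit (R := k) x • comul (R := k) ℓ := by
  rw [← Bialgebra.comul_mul, hℓ, map_smul]

theorem one_tmul_mul_comul (x : H) :
    (1 ⊗ₜ[k] x) * comul ℓ = (antipode k x ⊗ₜ[k] 1) * comul ℓ := by
  let 𝓡 := ℛ k x
  have hx : ∑ i ∈ 𝓡.index, counit (R := k) (𝓡.right i) • 𝓡.left i = x := by
    simpa only [map_sum, rid_tmul, one_smul] using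
      congr(TensorProduct.rid k H $(sum_tmul_counit_eq 𝓡))
  calc (1 ⊗ₜ[k] x) * comul ℓ
      = ∑ i ∈ 𝓡.index, (antipode k (𝓡.left i) ⊗ₜ[k] 1) * (comul (𝓡.right i) * comul ℓ) := by
        simp [← sum_antipode_tmul_one_mul_comul 𝓡, Finset.sum_mul, mul_assoc]
    _ = (antipode k x ⊗ₜ[k] 1) * comul ℓ := by
        simp [hℓ.comul_mul_comul, ← hx, map_sum, sum_tmul, Finset.sum_mul,
          ← smul_tmul']

theorem mul_rightHit (x : H) (f : H →ₗ[k] k) :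
    x * rightHit ℓ f = rightHit ℓ (f ∘ₗ mulLeft k (antipode k x)) := by
  have hleft : mulLeft k x ∘ₗ (TensorProduct.lid k H).toLinearMap ∘ₗ f.rTensor H =
      (TensorProduct.lid k H).toLinearMap ∘ₗ f.rTensor H ∘ₗ mulLeft k (1 ⊗ₜ[k] x) := by
    ext; simp
  have hright : (TensorProduct.lid k H).toLinearMap ∘ₗ (f ∘ₗ mulLeft k (antipode k x)).rTensor H =
      (TensorProduct.lid k H).toLinearMap ∘ₗ f.rTensor H ∘ₗ mulLeft k (antipode k x ⊗ₜ[k] 1) := by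
    ext; simp
  have h1 := congr($hleft (comul ℓ))
  have h2 := congr($hright (comul ℓ))
  simp only [comp_apply, LinearEquiv.coe_coe, mulLeft_apply] at h1 h2
  rw [rightHit_apply, rightHit_apply, h1, h2, hℓ.one_tmul_mul_comul]

theorem rightHit_surjective [Module.Free k H] [Module.Finite k H] (f : H →ₗ[k] k) (hf : f ℓ = 1) :
    Function.Surjective (rightHit (k := k) ℓ) := by
  let I := range (rightHit (k := k) ℓ)
  have hI (x : H) : ∀ y ∈ I, x * y ∈ I := by
    rintro _ ⟨g, rfl⟩
    exact ⟨_, (hℓ.mul_rightHit x g).symm⟩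
  let b := Module.Free.chooseBasis k H
  have hone : (1 : H) = ∑ i, antipode k (rightHit (b i) f) * rightHit ℓ (b.coord i) :=
    calc (1 : H)
        = algebraMap k H (counit (rightHit ℓ f)) := by rw [counit_rightHit, hf, map_one]
      _ = mul' k H ((antipode k).rTensor H (comul (rightHit ℓ f))) :=
          (mul_antipode_rTensor_comul_apply _).symm
      _ = mul' k H ((antipode k ∘ₗ rightHit.flip f).rTensor H
            (∑ i, b i ⊗ₜ TensorProduct.lid k H ((b.coord i).rTensor H (comul ℓ)))) := by
          rw [b.sum_tmul_lid_rTensor_coord, comul_rightHit, rTensor_comp_apply]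
      _ = ∑ i, antipode k (rightHit (b i) f) * rightHit ℓ (b.coord i) := by
          simp [map_sum, rightHit_apply]
  intro x
  have hone_mem : (1 : H) ∈ I :=
    hone ▸ Submodule.sum_mem _ fun i _ => hI _ _ (mem_range_self _ _)
  exact mem_range.mp (mul_one x ▸ hI x 1 hone_mem)

end IsLeftIntegral

end

theorem left_integral_nondegenerate_general
    {k H : Type*} [Field k] [Ring H] [HopfAlgebra k H] [FiniteDimensional k H]
    (ℓ : H) (hℓ : ∀ x : H, x * ℓ = Coalgebra.counit (R := k) x • ℓ)
    (c : H →ₗ[k] k)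
    (hcl : c ℓ = 1) :
    (∀ φ : H →ₗ[k] k, (∀ ψ : H →ₗ[k] k, conv φ ψ ℓ = 0) → φ = 0) ∧
    (∀ ψ : H →ₗ[k] k, (∀ φ : H →ₗ[k] k, conv φ ψ ℓ = 0) → ψ = 0) := by
  have hsurj := IsLeftIntegral.rightHit_surjective hℓ c hcl
  have hinj : Function.Injective (rightHit (k := k) ℓ) :=
    (LinearMap.injective_iff_surjective_of_finrank_eq_finrank Subspace.dual_finrank_eq).mpr hsurj
  refine ⟨fun φ hφ => hinj ?_, fun ψ hψ => ?_⟩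
  · rw [map_zero, ← Module.forall_dual_apply_eq_zero_iff k]
    simpa [conv_apply_eq_apply_rightHit] using hφ
  · ext x
    obtain ⟨φ, rfl⟩ := hsurj x
    simpa [conv_apply_eq_apply_rightHit] using hψ φ

/-- Let `H` be a finite-dimensional Hopf algebra over a field `k`, `ℓ ∈ H` a left-integral
(`x·ℓ = ε(x)·ℓ`), and `c : H → k` a left-cointegral (a left-integral of the dual Hopf
algebra, i.e. `φ * c = φ(1)·c` for every linear form `φ`).  If `c(ℓ) = 1`, then `ℓ` is
non-degenerate: the bilinear form `H* ⊗ H* → k`, `φ ⊗ ψ ↦ φ(ℓ⁽¹⁾)ψ(ℓ⁽²⁾)`, is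
non-degenerate. -/
theorem left_integral_nondegenerate
    {k H : Type*} [Field k] [Ring H] [HopfAlgebra k H] [FiniteDimensional k H]
    (ℓ : H) (hℓ : ∀ x : H, x * ℓ = Coalgebra.counit (R := k) x • ℓ)
    (c : H →ₗ[k] k) (hc : ∀ φ : H →ₗ[k] k, conv φ c = φ 1 • c)
    (hcl : c ℓ = 1) :
    (∀ φ : H →ₗ[k] k, (∀ ψ : H →ₗ[k] k, conv φ ψ ℓ = 0) → φ = 0) ∧
    (∀ ψ : H →ₗ[k] k, (∀ φ : H →ₗ[k] k, conv φ ψ ℓ = 0) → ψ = 0) :=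
  left_integral_nondegenerate_general ℓ hℓ c hcl
end
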